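/- Let w ≥ 5 and x ≥ 5 be integers, and assume we are not in one of the cases (w = 5 and x ≤ 7) or (w,x) = (6,5). Then the binomial coefficient C(x+w−1, w) satisfies C(x+w−1, w) ≤ x^(w − 0.73·w/ln(x)), as an inequality of real numbers. -/

import Mathlib

/-!
Since `x ^ (c / log x) = exp c`, the claim says `C(x+w-1, w) * exp 0.73 ^ w ≤ x ^ w`, and
`exp 0.73 ≤ 2.08`. The quotient `C(x+w-1, w) * K ^ w / x ^ w` is a product of the factors
`K (x + i - 1) / (i x)` for `1 ≤ i ≤ w`, so for `K > 0` it decreases in `x`, and it decreases in `w`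
as long as `K (x + w) ≤ x (w + 1)`, which for `K = 2.08` holds once `x ≥ 5` and `w ≥ 2`.
It therefore suffices to check the corner cases `(w, x) = (5, 8), (7, 5), (6, 6), (6, 7)` numerically.
-/

open Real

namespace Real

theorem rpow_div_log {x : ℝ} (hx₀ : 0 < x) (hx₁ : x ≠ 1) (c : ℝ) :
    x ^ (c / log x) = exp c := by
  rw [rpow_def_of_pos hx₀, mul_div_cancel₀ _ (log_ne_zero_of_pos_of_ne_one hx₀ hx₁)]

theorem exp_seventy_three_hundredths_le : exp 0.73 ≤ 2.08 := by
  rw [← le_log_iff_exp_le (by norm_num), show (2.08 : ℝ) = 2 * 1.04 by norm_num,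
    log_mul (by norm_num) (by norm_num)]
  have h₁ := one_sub_inv_le_log_of_pos (show (0 : ℝ) < 1.04 by norm_num)
  have h₂ := log_two_gt_d9
  norm_num at h₁ h₂ ⊢
  linarith

end Real

namespace Nat

theorem cast_choose_mul_pow_le_succ_left (K : ℝ) {w x : ℕ} (hx : 0 < x)
    (h : ((x + w - 1).choose w : ℝ) * K ^ w ≤ (x : ℝ) ^ w) :
    ((x + 1 + w - 1).choose w : ℝ) * K ^ w ≤ ((x + 1 : ℕ) : ℝ) ^ w := by
  have hx₀ : (0 : ℝ) < x := by exact_mod_cast hx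
  have hchoose : ((x + w - 1).choose w : ℝ) * (x + w) = ((x + w).choose w : ℝ) * x := by
    have := choose_mul_succ_eq (x + w - 1) w
    rw [show x + w - 1 + 1 = x + w by omega, show x + w - w = x by omega] at this
    exact_mod_cast this
  have hbernoulli : (x : ℝ) ^ w * (x + w) ≤ ((x : ℝ) + 1) ^ w * x := by
    have := one_add_mul_le_pow (by linarith [one_div_pos.2 hx₀] : (-2 : ℝ) ≤ 1 / x) w
    rw [show (x : ℝ) + 1 = x * (1 + 1 / x) by field_simp, mul_pow]
    calc (x : ℝ) ^ w * (x + w) = x ^ w * (1 + w * (1 / x)) * x := by field_simp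
      _ ≤ x ^ w * (1 + 1 / x) ^ w * x := by gcongr
  rw [show x + 1 + w - 1 = x + w by omega, ← mul_le_mul_iff_of_pos_right hx₀]
  push_cast
  calc ((x + w).choose w : ℝ) * K ^ w * x = ((x + w - 1).choose w * K ^ w) * (x + w) := by
        rw [mul_right_comm, ← hchoose]; ring
    _ ≤ (x : ℝ) ^ w * (x + w) := by gcongr
    _ ≤ ((x : ℝ) + 1) ^ w * x := hbernoulli

theorem cast_choose_mul_pow_le_succ_right {K : ℝ} (hK : 0 ≤ K) {w x : ℕ} (hx : 0 < x)
    (hKx : K * (x + w) ≤ x * (w + 1))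
    (h : ((x + w - 1).choose w : ℝ) * K ^ w ≤ (x : ℝ) ^ w) :
    ((x + (w + 1) - 1).choose (w + 1) : ℝ) * K ^ (w + 1) ≤ (x : ℝ) ^ (w + 1) := by
  have hchoose :
      ((x + w - 1).choose w : ℝ) * (x + w) = ((x + w).choose (w + 1) : ℝ) * (w + 1) := by
    have := add_one_mul_choose_eq (x + w - 1) w
    rw [show x + w - 1 + 1 = x + w by omega] at this
    rw [mul_comm]
    exact_mod_cast this
  rw [show x + (w + 1) - 1 = x + w by omega, ← mul_le_mul_iff_of_pos_right w.cast_add_one_pos]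
  calc ((x + w).choose (w + 1) : ℝ) * K ^ (w + 1) * (w + 1)
      = ((x + w - 1).choose w * K ^ w) * (K * (x + w)) := by
        rw [pow_succ]; linear_combination K ^ (w + 1) * hchoose.symm
    _ ≤ (x : ℝ) ^ w * (x * (w + 1)) := by gcongr
    _ = (x : ℝ) ^ (w + 1) * (w + 1) := by ring

end Nat

theorem choose_mul_two_oh_eight_pow_le_of_base {x w₀ w : ℕ} (hx : 5 ≤ x)
    (hw₀ : 2 ≤ w₀) (hw : w₀ ≤ w)
    (h : ((x + w₀ - 1).choose w₀ : ℝ) * 2.08 ^ w₀ ≤ (x : ℝ) ^ w₀) :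
    ((x + w - 1).choose w : ℝ) * 2.08 ^ w ≤ (x : ℝ) ^ w := by
  induction w, hw using Nat.le_induction with
  | base => exact h
  | succ w hw ih =>
    have hx' : (5 : ℝ) ≤ x := by exact_mod_cast hx
    have hw' : (2 : ℝ) ≤ w := by exact_mod_cast hw₀.trans hw
    exact Nat.cast_choose_mul_pow_le_succ_right (by norm_num) (by omega) (by nlinarith) ih

theorem choose_mul_two_oh_eight_pow_le {w x : ℕ} (hw : 5 ≤ w) (hx : 5 ≤ x)
    (h₁ : ¬ (w = 5 ∧ x ≤ 7)) (h₂ : ¬ (w = 6 ∧ x = 5)) :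
    ((x + w - 1).choose w : ℝ) * 2.08 ^ w ≤ (x : ℝ) ^ w := by
  rcases le_or_gt 8 x with hx₈ | hx₈
  · refine choose_mul_two_oh_eight_pow_le_of_base hx (by norm_num) hw ?_
    clear h₁ h₂ hw hx
    induction x, hx₈ using Nat.le_induction with
    | base => norm_num [show (8 + 5 - 1).choose 5 = 792 by decide]
    | succ x hx₈ ih => exact Nat.cast_choose_mul_pow_le_succ_left _ (by omega) ih
  · interval_cases x
    · refine choose_mul_two_oh_eight_pow_le_of_base (w₀ := 7) le_rfl (by norm_num) (by omega) ?_
      norm_num [show (5 + 7 - 1).choose 7 = 330 by decide]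
    · refine choose_mul_two_oh_eight_pow_le_of_base (w₀ := 6) (by norm_num) (by norm_num)
        (by omega) ?_
      norm_num [show (6 + 6 - 1).choose 6 = 462 by decide]
    · refine choose_mul_two_oh_eight_pow_le_of_base (w₀ := 6) (by norm_num) (by norm_num)
        (by omega) ?_
      norm_num [show (7 + 6 - 1).choose 6 = 924 by decide]

theorem choose_le_rpow_of_ge_five (w x : ℕ) (hw : 5 ≤ w) (hx : 5 ≤ x)
    (h1 : ¬ (w = 5 ∧ x ≤ 7)) (h2 : ¬ (w = 6 ∧ x = 5)) :
    ((x + w - 1).choose w : ℝ) ≤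
      (x : ℝ) ^ ((w : ℝ) - 0.73 * (w : ℝ) / Real.log x) := by
  have hx₀ : (0 : ℝ) < x := by positivity
  have hx₁ : (x : ℝ) ≠ 1 := by norm_cast; omega
  rw [rpow_sub hx₀, rpow_natCast, rpow_div_log hx₀ hx₁, mul_comm, exp_nat_mul,
    le_div_iff₀ (by positivity)]
  calc ((x + w - 1).choose w : ℝ) * exp 0.73 ^ w
      ≤ ((x + w - 1).choose w : ℝ) * 2.08 ^ w := by
        gcongr; exact exp_seventy_three_hundredths_le
    _ ≤ (x : ℝ) ^ w := choose_mul_two_oh_eight_pow_le hw hx h1 h2
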